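/- Consider a decoupled model in ℂ⁴ (n = d = 2) with equal degrees D_1 = D_2 = D: P_1(z,w) = Σ_{j=D−k_1}^{k_1} α_j z_1^j w_1^{D−j} with α_j = conj(α_{D−j}), and P_2(z,w) = Σ_{j=D−k_2}^{k_2} β_j z_2^j w_2^{D−j} with β_j = conj(β_{D−j}), where D ≥ 2, D/2 ≤ k_i ≤ D−1, k_0 = max{k_1,k_2}. Then the model is admissible if and only if both hypersurface models {Re w = P_1} ⊂ ℂ² and {Re w = P_2} ⊂ ℂ² are admissible, where the hypersurface {Re w = P_i} is admissible means: there exist c ∈ ℝ, V ∈ ℂ∖{0} and a polynomial q in ζ such that ζ^{k_i}·c·(∂²P_i/∂z_i∂w_i)((1−ζ)V, (1−conj ζ)·conj V) = (1−conj ζ)^{D−2} q(ζ) for all |ζ| = 1 and q(ζ) ≠ 0 for all |ζ| = 1. -/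

import Mathlib

open ComplexConjugate

noncomputable section

/-- The decoupled polynomial `Σ_{j=D−k}^{k} γ_j z_i^j w_i^{D−j}` in the variables
`z = X ∘ Sum.inl`, `w = X ∘ Sum.inr` (case `n = 2`), using only the `i`-th pair. -/
def decP (D k : ℕ) (γ : ℕ → ℂ) (i : Fin 2) : MvPolynomial (Fin 2 ⊕ Fin 2) ℂ :=
  ∑ j ∈ Finset.Icc (D - k) k,
    MvPolynomial.C (γ j) * MvPolynomial.X (Sum.inl i) ^ j *
      MvPolynomial.X (Sum.inr i) ^ (D - j)

/-- Admissibility of the decoupled model `{Re w₁ = P₁, Re w₂ = P₂} ⊂ ℂ⁴`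
(with `D₁ = D₂ = D` and `k₀ = max k₁ k₂`). -/
def ModelAdmissible (D k1 k2 : ℕ) (α β : ℕ → ℂ) : Prop :=
  ∃ (c : Fin 2 → ℝ) (V : Fin 2 → ℂ), V ≠ 0 ∧
    ∃ Q : Fin 2 → Fin 2 → Polynomial ℂ,
      ∀ ζ : ℂ, ‖ζ‖ = 1 →
        (∀ i j : Fin 2,
          ζ ^ (max k1 k2) * ∑ ℓ : Fin 2, (c ℓ : ℂ) *
              MvPolynomial.eval
                (Sum.elim (fun p => (1 - ζ) * V p)
                  (fun p => (1 - conj ζ) * conj (V p)))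
                (MvPolynomial.pderiv (Sum.inl i)
                  (MvPolynomial.pderiv (Sum.inr j)
                    (![decP D k1 α 0, decP D k2 β 1] ℓ)))
            = (1 - conj ζ) ^ (D - 2) * (Q i j).eval ζ) ∧
        IsUnit (Matrix.of fun i j : Fin 2 => (Q i j).eval ζ)

/-- Admissibility of the hypersurface model `{Re w = P_i} ⊂ ℂ²`, where `P_i` only
involves the `i`-th pair of variables. -/
def HypAdmissible (D ki : ℕ) (Pi : MvPolynomial (Fin 2 ⊕ Fin 2) ℂ) (i : Fin 2) : Prop :=
  ∃ (c : ℝ) (v : ℂ), v ≠ 0 ∧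
    ∃ q : Polynomial ℂ,
      ∀ ζ : ℂ, ‖ζ‖ = 1 →
        ζ ^ ki * (c : ℂ) *
            MvPolynomial.eval
              (Sum.elim (fun _ => (1 - ζ) * v) (fun _ => (1 - conj ζ) * conj v))
              (MvPolynomial.pderiv (Sum.inl i) (MvPolynomial.pderiv (Sum.inr i) Pi))
          = (1 - conj ζ) ^ (D - 2) * q.eval ζ ∧ q.eval ζ ≠ 0

/-!
Since `P_ℓ` involves only `(z_ℓ, w_ℓ)`, the matrix of mixed second derivatives is diagonal
with entries `c_ℓ ∂²P_ℓ/∂z_ℓ∂w_ℓ`. Polynomials agreeing on the unit circle minus `1` are equal,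
so the off-diagonal `Q_ij` vanish and invertibility of `Q(ζ)` is nonvanishing of its diagonal:
the model condition splits into one condition for each `ℓ`. On the unit circle
`1 - ζ = -ζ (1 - conj ζ)`, so every such entry is `(1 - conj ζ)^(D-2)` times a polynomial in `ζ`;
hence the power of `ζ` in front (`k₀` for the model, `k_ℓ` for the hypersurface) is irrelevant.
Finally, `V_ℓ = 0` is compatible with a nonvanishing entry only for `D = 2`, where the entry
does not depend on `V_ℓ` at all.
-/

def mixedPartial (D k : ℕ) (γ : ℕ → ℂ) (x y : ℂ) : ℂ :=
  ∑ m ∈ Finset.Icc (D - k) k, γ m * m * (D - m : ℕ) * x ^ (m - 1) * y ^ (D - m - 1)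

def CircleAdmissible (D e k : ℕ) (γ : ℕ → ℂ) : Prop :=
  ∃ (c : ℝ) (v : ℂ), v ≠ 0 ∧
    ∃ q : Polynomial ℂ,
      ∀ ζ : ℂ, ‖ζ‖ = 1 →
        ζ ^ e * c * mixedPartial D k γ ((1 - ζ) * v) ((1 - conj ζ) * conj v)
          = (1 - conj ζ) ^ (D - 2) * q.eval ζ ∧ q.eval ζ ≠ 0

open MvPolynomial in
theorem eval_pderiv_pderiv_decP (D k : ℕ) (γ : ℕ → ℂ) (l i j : Fin 2) (x y : Fin 2 → ℂ) :
    eval (Sum.elim x y) (pderiv (Sum.inl i) (pderiv (Sum.inr j) (decP D k γ l))) =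
      if i = l ∧ j = l then mixedPartial D k γ (x l) (y l) else 0 := by
  unfold decP mixedPartial
  rw [map_sum, map_sum, map_sum]
  by_cases hi : i = l <;> by_cases hj : j = l <;>
    simp [hi, hj, mul_comm, mul_assoc, mul_left_comm]

open MvPolynomial in
theorem sum_eval_pderiv_pderiv_decP (D k1 k2 : ℕ) (α β : ℕ → ℂ) (c : Fin 2 → ℝ)
    (x y : Fin 2 → ℂ) (i j : Fin 2) :
    ∑ ℓ : Fin 2, (c ℓ : ℂ) * eval (Sum.elim x y)
        (pderiv (Sum.inl i) (pderiv (Sum.inr j) (![decP D k1 α 0, decP D k2 β 1] ℓ))) =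
      if i = j then c i * mixedPartial D (![k1, k2] i) (![α, β] i) (x i) (y i) else 0 := by
  fin_cases i <;> fin_cases j <;> simp [Fin.sum_univ_two, eval_pderiv_pderiv_decP]

theorem mixedPartial_zero_zero {D : ℕ} (hD : D ≠ 2) (k : ℕ) (γ : ℕ → ℂ) :
    mixedPartial D k γ 0 0 = 0 := by
  refine Finset.sum_eq_zero fun m _ => ?_
  rcases Nat.lt_or_ge m D with hm | hm
  · rcases m with _ | _ | m
    · simp
    · simp [zero_pow (show D - 1 - 1 ≠ 0 by omega)]
    · rw [zero_pow (by omega), mul_zero, zero_mul]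
  · simp [Nat.sub_eq_zero_of_le hm]

theorem mixedPartial_two (k : ℕ) (γ : ℕ → ℂ) (x y x' y' : ℂ) :
    mixedPartial 2 k γ x y = mixedPartial 2 k γ x' y' := by
  refine Finset.sum_congr rfl fun m _ => ?_
  rcases m with _ | _ | m <;> simp

theorem one_sub_conj_ne_zero {ζ : ℂ} (h : ζ ≠ 1) : 1 - conj ζ ≠ 0 := by
  rw [sub_ne_zero, ne_comm]
  contrapose! h
  simpa using congrArg conj h

theorem infinite_sphere_diff_one : (Metric.sphere (0 : ℂ) 1 \ {1}).Infinite :=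
  have hnontriv : (Metric.sphere (0 : ℂ) 1).Nontrivial :=
    Set.nontrivial_of_mem_mem_ne (by simp) (by simp) (by norm_num : (1 : ℂ) ≠ -1)
  ((isPreconnected_sphere (by simp [Complex.rank_real_complex]) 0 1).infinite_of_nontrivial
    hnontriv).sdiff (Set.finite_singleton 1)

theorem Polynomial.eq_of_one_sub_conj_pow_mul_eval_eq (n : ℕ) {p q : Polynomial ℂ}
    (h : ∀ ζ : ℂ, ‖ζ‖ = 1 → (1 - conj ζ) ^ n * p.eval ζ = (1 - conj ζ) ^ n * q.eval ζ) :
    p = q := by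
  refine p.eq_of_infinite_eval_eq q (infinite_sphere_diff_one.mono ?_)
  rintro ζ ⟨hζ, hζ1 : ζ ≠ 1⟩
  exact mul_left_cancel₀ (pow_ne_zero n (one_sub_conj_ne_zero hζ1)) (h ζ (by simpa using hζ))

theorem exists_mixedPartial_eq_one_sub_conj_pow_mul (D k : ℕ) (γ : ℕ → ℂ) (v : ℂ) :
    ∃ p : Polynomial ℂ, ∀ ζ : ℂ, ‖ζ‖ = 1 →
      mixedPartial D k γ ((1 - ζ) * v) ((1 - conj ζ) * conj v)
        = (1 - conj ζ) ^ (D - 2) * p.eval ζ := by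
  refine ⟨∑ m ∈ Finset.Icc (D - k) k,
    Polynomial.C (γ m * m * (D - m : ℕ) * (-v) ^ (m - 1) * conj v ^ (D - m - 1)) *
      Polynomial.X ^ (m - 1), fun ζ hζ => ?_⟩
  have hζζ : ζ * conj ζ = 1 := by simp [Complex.mul_conj', hζ]
  have h1ζ : (1 - ζ) * v = -ζ * v * (1 - conj ζ) := by linear_combination -v * hζζ
  simp only [mixedPartial, Polynomial.eval_finsetSum, Finset.mul_sum, Polynomial.eval_mul,
    Polynomial.eval_C, Polynomial.eval_pow, Polynomial.eval_X]
  refine Finset.sum_congr rfl fun m _ => ?_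
  rcases Nat.lt_or_ge m D with hm | hm
  · rcases m with _ | m
    · simp
    obtain ⟨b, rfl⟩ : ∃ b, D = m + b + 2 := ⟨D - m - 2, by omega⟩
    rw [show m + b + 2 - 2 = m + b by omega, show m + b + 2 - (m + 1) - 1 = b by omega,
      Nat.add_sub_cancel, h1ζ]
    simp only [mul_pow]
    ring
  · simp [Nat.sub_eq_zero_of_le hm]

theorem CircleAdmissible.exponent_congr {D e k : ℕ} {γ : ℕ → ℂ} (h : CircleAdmissible D e k γ)
    (e' : ℕ) : CircleAdmissible D e' k γ := by
  obtain ⟨c, v, hv, q, hq⟩ := h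
  obtain ⟨p, hp⟩ := exists_mixedPartial_eq_one_sub_conj_pow_mul D k γ v
  have hqp : q = Polynomial.C (c : ℂ) * Polynomial.X ^ e * p := by
    refine Polynomial.eq_of_one_sub_conj_pow_mul_eval_eq (D - 2) fun ζ hζ => ?_
    rw [← (hq ζ hζ).1, hp ζ hζ]
    simp only [Polynomial.eval_mul, Polynomial.eval_C, Polynomial.eval_pow, Polynomial.eval_X]
    ring
  refine ⟨c, v, hv, Polynomial.C (c : ℂ) * Polynomial.X ^ e' * p, fun ζ hζ => ⟨?_, ?_⟩⟩
  · rw [hp ζ hζ]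
    simp only [Polynomial.eval_mul, Polynomial.eval_C, Polynomial.eval_pow, Polynomial.eval_X]
    ring
  · have hζ0 : ζ ≠ 0 := by rintro rfl; simp at hζ
    have hqζ := (hq ζ hζ).2
    simp only [hqp, Polynomial.eval_mul, Polynomial.eval_C, Polynomial.eval_pow,
      Polynomial.eval_X, mul_ne_zero_iff] at hqζ ⊢
    exact ⟨⟨hqζ.1.1, pow_ne_zero e' hζ0⟩, hqζ.2⟩

theorem circleAdmissible_exponent_iff (D e e' k : ℕ) (γ : ℕ → ℂ) :
    CircleAdmissible D e k γ ↔ CircleAdmissible D e' k γ :=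
  ⟨(·.exponent_congr e'), (·.exponent_congr e)⟩

theorem circleAdmissible_of_forall {D e k : ℕ} {γ : ℕ → ℂ} (c : ℝ) (v : ℂ) (q : Polynomial ℂ)
    (h : ∀ ζ : ℂ, ‖ζ‖ = 1 →
      ζ ^ e * c * mixedPartial D k γ ((1 - ζ) * v) ((1 - conj ζ) * conj v)
        = (1 - conj ζ) ^ (D - 2) * q.eval ζ ∧ q.eval ζ ≠ 0) :
    CircleAdmissible D e k γ := by
  by_cases hv : v = 0
  · subst hv
    by_cases hD : D = 2
    · subst hD
      refine ⟨c, 1, one_ne_zero, q, fun ζ hζ => ?_⟩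
      rw [mixedPartial_two k γ _ _ ((1 - ζ) * 0) ((1 - conj ζ) * conj 0)]
      exact h ζ hζ
    · have h1 := h (-1) (by simp)
      simp [mixedPartial_zero_zero hD] at h1
  · exact ⟨c, v, hv, q, h⟩

theorem hypAdmissible_decP_iff (D k : ℕ) (γ : ℕ → ℂ) (i : Fin 2) :
    HypAdmissible D k (decP D k γ i) i ↔ CircleAdmissible D k k γ := by
  simp only [HypAdmissible, CircleAdmissible, eval_pderiv_pderiv_decP, and_self, if_true]

theorem modelAdmissible_iff (D k1 k2 : ℕ) (α β : ℕ → ℂ) :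
    ModelAdmissible D k1 k2 α β ↔
      ∀ i : Fin 2, CircleAdmissible D (max k1 k2) (![k1, k2] i) (![α, β] i) := by
  simp only [ModelAdmissible, sum_eval_pderiv_pderiv_decP]
  constructor
  · rintro ⟨c, V, -, Q, hQ⟩ i
    have hoff : ∀ i j, i ≠ j → Q i j = 0 := fun i j hij =>
      Polynomial.eq_of_one_sub_conj_pow_mul_eval_eq (D - 2) fun ζ hζ => by
        rw [← ((hQ ζ hζ).1 i j), if_neg hij, Polynomial.eval_zero, mul_zero, mul_zero]
    have hdiag : ∀ ζ : ℂ, Matrix.of (fun i j => (Q i j).eval ζ) =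
        Matrix.diagonal fun i => (Q i i).eval ζ := fun ζ => by
      ext i j
      by_cases hij : i = j <;> simp [hij, hoff i j]
    refine circleAdmissible_of_forall (c i) (V i) (Q i i) fun ζ hζ => ⟨?_, ?_⟩
    · simpa [mul_assoc] using (hQ ζ hζ).1 i i
    · have hunit := (hQ ζ hζ).2
      rw [hdiag ζ, Matrix.isUnit_diagonal] at hunit
      exact (hunit.map (Pi.evalMonoidHom _ i)).ne_zero
  · intro h
    choose c v hv q hq using h
    refine ⟨c, v, fun h0 => hv 0 (congrFun h0 0), fun i j => if i = j then q i else 0,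
      fun ζ hζ => ⟨fun i j => ?_, ?_⟩⟩
    · split_ifs with hij
      · subst hij
        simpa [mul_assoc] using (hq i ζ hζ).1
      · simp [hij]
    · have hdiag : Matrix.of (fun i j => (if i = j then q i else 0).eval ζ) =
          Matrix.diagonal fun i => (q i).eval ζ := by
        ext i j
        by_cases hij : i = j <;> simp [hij]
      rw [hdiag, Matrix.isUnit_diagonal]
      exact Pi.isUnit_iff.2 fun i => (hq i ζ hζ).2.isUnit

theorem stmt9_general (D k1 k2 : ℕ) (α β : ℕ → ℂ) :
    ModelAdmissible D k1 k2 α β ↔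
      (HypAdmissible D k1 (decP D k1 α 0) 0 ∧ HypAdmissible D k2 (decP D k2 β 1) 1) := by
  rw [modelAdmissible_iff, Fin.forall_fin_two, hypAdmissible_decP_iff, hypAdmissible_decP_iff,
    circleAdmissible_exponent_iff D k1 (max k1 k2), circleAdmissible_exponent_iff D k2 (max k1 k2)]
  rfl

theorem stmt9 (D k1 k2 : ℕ) (hD : 2 ≤ D)
    (hk1 : D ≤ 2 * k1) (hk1' : k1 ≤ D - 1)
    (hk2 : D ≤ 2 * k2) (hk2' : k2 ≤ D - 1)
    (α β : ℕ → ℂ)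
    (hα : ∀ j, D - k1 ≤ j → j ≤ k1 → α j = conj (α (D - j)))
    (hβ : ∀ j, D - k2 ≤ j → j ≤ k2 → β j = conj (β (D - j))) :
    ModelAdmissible D k1 k2 α β ↔
      (HypAdmissible D k1 (decP D k1 α 0) 0 ∧ HypAdmissible D k2 (decP D k2 β 1) 1) :=
  stmt9_general D k1 k2 α β
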